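/- Let AF = ⟨AR, attacks⟩ be a finite argumentation framework; consider the subprogram P consisting only of the clauses d(a) ← ¬d(b) for each (b,a) ∈ attacks (with ¬ default negation). Then a set M ⊆ { d(a) | a ∈ AR } is a stable model of P if and only if S = { a ∈ AR | d(a) ∉ M } is a stable extension of AF, i.e., S is conflict-free and attacks every argument not in S. -/
import Mathlib


inductive PForm (α : Type) where
  | atom : α → PForm α
  | tru : PForm α
  | fls : PForm α
  | neg : PForm α → PForm α
  | conj : PForm α → PForm α → PForm α
  | disj : PForm α → PForm α → PForm α
  | impl : PForm α → PForm α → PForm α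
deriving DecidableEq

def PForm.eval {α : Type} (M : Set α) : PForm α → Prop
  | .atom a => a ∈ M
  | .tru => True
  | .fls => False
  | .neg φ => ¬ PForm.eval M φ
  | .conj φ ψ => PForm.eval M φ ∧ PForm.eval M ψ
  | .disj φ ψ => PForm.eval M φ ∨ PForm.eval M ψ
  | .impl φ ψ => PForm.eval M φ → PForm.eval M ψ

def PForm.subst {α β : Type} (σ : α → PForm β) : PForm α → PForm β
  | .atom a => σ a
  | .tru => .tru
  | .fls => .fls
  | .neg φ => .neg (PForm.subst σ φ)
  | .conj φ ψ => .conj (PForm.subst σ φ) (PForm.subst σ ψ)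
  | .disj φ ψ => .disj (PForm.subst σ φ) (PForm.subst σ ψ)
  | .impl φ ψ => .impl (PForm.subst σ φ) (PForm.subst σ ψ)

def ModelOf {α : Type} (M : Set α) (T : Set (PForm α)) : Prop := ∀ φ ∈ T, PForm.eval M φ

def MinimalModel {α : Type} (M : Set α) (T : Set (PForm α)) : Prop :=
  ModelOf M T ∧ ∀ M', ModelOf M' T → M' ⊆ M → M' = M

def MaximalModel {α : Type} (M : Set α) (T : Set (PForm α)) : Prop :=
  ModelOf M T ∧ ∀ M', ModelOf M' T → M ⊆ M' → M' = M

noncomputable def bigConj {ι α : Type} (s : Finset ι) (f : ι → PForm α) : PForm α :=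
  (s.toList.map f).foldr PForm.conj PForm.tru

noncomputable def bigDisj {ι α : Type} (s : Finset ι) (f : ι → PForm α) : PForm α :=
  (s.toList.map f).foldr PForm.disj PForm.fls

def attackers {α : Type} [DecidableEq α] (att : Finset (α × α)) (a : α) : Finset α :=
  (att.filter (fun p => p.2 = a)).image Prod.fst

def conflictFree {α : Type} (att : Finset (α × α)) (S : Set α) : Prop :=
  ∀ a ∈ S, ∀ b ∈ S, (a, b) ∉ att

def acceptable {α : Type} (att : Finset (α × α)) (S : Set α) (a : α) : Prop :=
  ∀ b, (b, a) ∈ att → ∃ c ∈ S, (c, b) ∈ att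

def admissible {α : Type} (att : Finset (α × α)) (S : Set α) : Prop :=
  conflictFree att S ∧ ∀ a ∈ S, acceptable att S a

def preferredExt {α : Type} (att : Finset (α × α)) (S : Set α) : Prop :=
  admissible att S ∧ ∀ S', admissible att S' → S ⊆ S' → S' = S

noncomputable def alphaTheory {α : Type} [DecidableEq α] (att : Finset (α × α)) : Set (PForm α) :=
  { φ | ∃ p ∈ att, φ = PForm.impl (PForm.neg (PForm.atom p.1)) (PForm.atom p.2) } ∪
  { φ | ∃ p ∈ att, φ = PForm.impl (bigConj (attackers att p.1) PForm.atom) (PForm.atom p.2) }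

noncomputable def betaTheory {α : Type} [DecidableEq α] (att : Finset (α × α)) : Set (PForm α) :=
  { φ | ∃ p ∈ att, φ = PForm.impl (PForm.atom p.2) (PForm.neg (PForm.atom p.1)) } ∪
  { φ | ∃ p ∈ att, φ = PForm.impl (PForm.atom p.2) (bigDisj (attackers att p.1) PForm.atom) }

structure Clause (α : Type) where
  head : Finset α
  pos : Finset α
  negb : Finset α

def Clause.holds {α : Type} (M : Set α) (c : Clause α) : Prop :=
  ((∀ b ∈ c.pos, b ∈ M) ∧ (∀ b ∈ c.negb, b ∉ M)) → ∃ a ∈ c.head, a ∈ M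

def ClModel {α : Type} (M : Set α) (P : Set (Clause α)) : Prop := ∀ c ∈ P, Clause.holds M c

def ClMinModel {α : Type} (M : Set α) (P : Set (Clause α)) : Prop :=
  ClModel M P ∧ ∀ M', ClModel M' P → M' ⊆ M → M' = M

def reduct {α : Type} (P : Set (Clause α)) (S : Set α) : Set (Clause α) :=
  { c' | ∃ c ∈ P, (∀ b ∈ c.negb, b ∉ S) ∧ c' = ⟨c.head, c.pos, ∅⟩ }

def StableModel {α : Type} (S : Set α) (P : Set (Clause α)) : Prop :=
  ClMinModel S (reduct P S)

theorem stmt15 {α : Type} [DecidableEq α] [Fintype α] (att : Finset (α × α)) (M : Set α) :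
    StableModel M { c | ∃ p ∈ att, c = ⟨{p.2}, ∅, {p.1}⟩ } ↔
      (conflictFree att Mᶜ ∧ ∀ a ∈ M, ∃ b ∈ Mᶜ, (b, a) ∈ att) := by
  set P : Set (Clause α) := { c | ∃ p ∈ att, c = ⟨{p.2}, ∅, {p.1}⟩ } with hP
  have hred : reduct P M = { c | ∃ p ∈ att, p.1 ∉ M ∧ c = ⟨{p.2}, ∅, ∅⟩ } := by
    ext c
    constructor
    · rintro ⟨c0, ⟨p, hp, rfl⟩, hneg, rfl⟩
      exact ⟨p, hp, by simpa using hneg p.1 (by simp), rfl⟩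
    · rintro ⟨p, hp, h1, rfl⟩
      exact ⟨⟨{p.2}, ∅, {p.1}⟩, ⟨p, hp, rfl⟩, by simpa using h1, rfl⟩
  have hmodel : ∀ M' : Set α, ClModel M' (reduct P M) ↔
      ∀ p ∈ att, p.1 ∉ M → p.2 ∈ M' := by
    intro M'
    rw [hred]
    constructor
    · intro h p hp h1
      have := h ⟨{p.2}, ∅, ∅⟩ ⟨p, hp, h1, rfl⟩ ⟨by simp, by simp⟩
      simpa using this
    · rintro h c ⟨p, hp, h1, rfl⟩ _
      exact ⟨p.2, by simp, h p hp h1⟩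
  constructor
  · rintro ⟨hmod, hmin⟩
    have hFM : ∀ p ∈ att, p.1 ∉ M → p.2 ∈ M := (hmodel M).1 hmod
    set F : Set α := { a | ∃ b, b ∉ M ∧ (b, a) ∈ att } with hF
    have hFmod : ClModel F (reduct P M) :=
      (hmodel F).2 (fun p hp h1 => ⟨p.1, h1, hp⟩)
    have hFsub : F ⊆ M := by
      rintro a ⟨b, hb, hba⟩
      exact hFM (b, a) hba hb
    have hFeq : F = M := hmin F hFmod hFsub
    constructor
    · intro a ha b hb hab
      exact hb (hFeq ▸ (⟨a, ha, hab⟩ : b ∈ F))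
    · intro a ha
      have : a ∈ F := hFeq ▸ ha
      obtain ⟨b, hb, hba⟩ := this
      exact ⟨b, hb, hba⟩
  · rintro ⟨hcf, hatt⟩
    constructor
    · refine (hmodel M).2 (fun p hp h1 => ?_)
      by_contra h2
      exact hcf p.1 h1 p.2 h2 hp
    · intro M' hM' hsub
      refine Set.Subset.antisymm hsub (fun a ha => ?_)
      obtain ⟨b, hb, hba⟩ := hatt a ha
      exact (hmodel M').1 hM' (b, a) hba hb
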